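/- Exponentiating the Gopakumar–Vafa free energy of the resolved conifold gives the infinite product: exp( ∑_{k=1}^∞ e^{2πikt}/(k (2 sin(kλ/2))²) ) = ∏_{m=0}^∞ (1 - Q q^{m+1})^{m+1}, where Q = e^{2πit}, q = e^{iλ}, valid for Im(λ) > 0 and Im(t) sufficiently large so that all series converge absolutely. -/

import Mathlib

/-!
With `Q = e^{2πit}` and `q = e^{iλ}` one has
`1 / (2 sin(kλ/2))² = -q^k / (1 - q^k)² = -∑_{m≥1} m q^{mk}`, so the free energy is minus the
absolutely convergent double series `∑_{m,k ≥ 1} m (Q q^m)^k / k`. Summing it over `k` first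
instead gives `-∑_{m≥1} m log (1 - Q q^m)` by the Taylor series of `log (1 - z)`, and
exponentiating yields the product.
-/

open Complex

lemma norm_exp_I_mul_lt_one {z : ℂ} (hz : 0 < z.im) : ‖exp (I * z)‖ < 1 := by
  rw [norm_exp, Real.exp_lt_one_iff]
  simpa using hz

lemma two_sin_half_sq_mul_exp (x : ℂ) :
    (2 * sin (x / 2)) ^ 2 * exp (I * x) = -(1 - exp (I * x)) ^ 2 := by
  have hx : exp (I * x) = exp (x / 2 * I) ^ 2 := by rw [← exp_nat_mul]; ring_nf
  have hinv : exp (-(x / 2) * I) * exp (x / 2 * I) = 1 := by rw [← exp_add]; ring_nf; exact exp_zero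
  rw [hx, sin]
  linear_combination (exp (-(x / 2) * I) - exp (x / 2 * I)) ^ 2 * exp (x / 2 * I) ^ 2 * I_sq
    - (exp (-(x / 2) * I) * exp (x / 2 * I) + 1 - 2 * exp (x / 2 * I) ^ 2) * hinv

lemma div_two_sin_half_sq (c x : ℂ) :
    c / (2 * sin (x / 2)) ^ 2 = -c * exp (I * x) / (1 - exp (I * x)) ^ 2 := by
  have key := two_sin_half_sq_mul_exp x
  by_cases h : 1 - exp (I * x) = 0
  · have hsin : (2 * sin (x / 2)) ^ 2 = 0 := by
      simpa [h, exp_ne_zero] using key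
    simp [h, hsin]
  · have hsin : (2 * sin (x / 2)) ^ 2 ≠ 0 := by
      intro h0
      rw [h0, zero_mul, eq_comm, neg_eq_zero] at key
      exact h (pow_eq_zero_iff two_ne_zero |>.mp key)
    rw [div_eq_div_iff hsin (pow_ne_zero 2 h)]
    linear_combination c * key

lemma hasSum_succ_mul_pow_succ {𝕜 : Type*} [NormedDivisionRing 𝕜] {z : 𝕜}
    (hz : ‖z‖ < 1) : HasSum (fun m : ℕ => (m + 1 : 𝕜) * z ^ (m + 1)) (z / (1 - z) ^ 2) := by
  rw_mod_cast [hasSum_nat_add_iff 1 (f := fun n : ℕ => (n : 𝕜) * z ^ n)]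
  simpa using hasSum_coe_mul_geometric_of_norm_lt_one hz

lemma norm_mul_pow_succ_lt_one {q Q : ℂ} (hq : ‖q‖ < 1) (hQ : ‖Q‖ ≤ 1) (m : ℕ) :
    ‖Q * q ^ (m + 1)‖ < 1 := by
  rw [norm_mul, norm_pow]
  calc ‖Q‖ * ‖q‖ ^ (m + 1) ≤ 1 * ‖q‖ ^ (m + 1) := by gcongr
    _ < 1 := by simpa using pow_lt_one₀ (norm_nonneg q) hq m.succ_ne_zero

lemma summable_succ_mul_mul_pow_pow_div_succ {q Q : ℂ} (hq : ‖q‖ < 1) (hQ : ‖Q‖ ≤ 1) :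
    Summable fun p : ℕ × ℕ => (p.1 + 1 : ℂ) * (Q * q ^ (p.1 + 1)) ^ (p.2 + 1) / (p.2 + 1) := by
  have hrow : Summable fun m : ℕ => (m + 1 : ℝ) * ‖q‖ ^ (m + 1) :=
    (hasSum_succ_mul_pow_succ (by simpa using hq)).summable
  have hcol : Summable fun k : ℕ => ‖q‖ ^ k := summable_geometric_of_lt_one (norm_nonneg q) hq
  refine .of_norm_bounded (hrow.mul_of_nonneg hcol (fun _ => by positivity) fun _ => by positivity)
    fun ⟨m, k⟩ => ?_
  have hk : (1 : ℝ) ≤ ‖(k + 1 : ℂ)‖ := by norm_cast; simp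
  have hexp : m + 1 + k ≤ (m + 1) * (k + 1) := by nlinarith
  simp only [norm_div, norm_mul, norm_pow, mul_pow]
  calc ‖(m + 1 : ℂ)‖ * (‖Q‖ ^ (k + 1) * (‖q‖ ^ (m + 1)) ^ (k + 1)) / ‖(k + 1 : ℂ)‖
      ≤ (m + 1 : ℝ) * (1 * ‖q‖ ^ (m + 1 + k)) / 1 := by
        gcongr
        · norm_cast
        · exact pow_le_one₀ (norm_nonneg Q) hQ
        · rw [← pow_mul]
          exact pow_le_pow_of_le_one (norm_nonneg q) hq.le hexp
    _ = (m + 1 : ℝ) * ‖q‖ ^ (m + 1) * ‖q‖ ^ k := by ring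

lemma hasSum_succ_mul_log_one_sub_mul_pow_succ {q Q : ℂ} (hq : ‖q‖ < 1) (hQ : ‖Q‖ ≤ 1) :
    HasSum (fun m : ℕ => (m + 1 : ℂ) * log (1 - Q * q ^ (m + 1)))
      (∑' k : ℕ, -(Q ^ (k + 1) * q ^ (k + 1)) / ((k + 1) * (1 - q ^ (k + 1)) ^ 2)) := by
  set F : ℕ × ℕ → ℂ := fun p => (p.1 + 1 : ℂ) * (Q * q ^ (p.1 + 1)) ^ (p.2 + 1) / (p.2 + 1)
  have hF : HasSum F (∑' p, F p) := (summable_succ_mul_mul_pow_pow_div_succ hq hQ).hasSum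
  have hrows : HasSum (fun m : ℕ => (m + 1 : ℂ) * -log (1 - Q * q ^ (m + 1))) (∑' p, F p) :=
    hF.prod_fiberwise fun m => by
      simpa [F, mul_div_assoc] using
        (hasSum_taylorSeries_neg_log' (norm_mul_pow_succ_lt_one hq hQ m)).mul_left (m + 1 : ℂ)
  have hcols : HasSum (fun k : ℕ => Q ^ (k + 1) * q ^ (k + 1) / ((k + 1) * (1 - q ^ (k + 1)) ^ 2))
      (∑' p, F p) := by
    refine ((Equiv.prodComm ℕ ℕ).hasSum_iff.mpr hF).prod_fiberwise fun k => ?_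
    have hz : ‖q ^ (k + 1)‖ < 1 := by
      simpa using pow_lt_one₀ (norm_nonneg q) hq k.succ_ne_zero
    rw [mul_div_mul_comm]
    refine ((hasSum_succ_mul_pow_succ hz).mul_left (Q ^ (k + 1) / (k + 1))).congr_fun fun m => ?_
    simp only [F, Function.comp_apply, Equiv.prodComm_apply, Prod.fst_swap, Prod.snd_swap]
    ring
  simp_rw [neg_div, tsum_neg, hcols.tsum_eq]
  simpa using hrows.neg

lemma hasProd_one_sub_mul_pow_succ_pow {q Q : ℂ} (hq : ‖q‖ < 1) (hQ : ‖Q‖ ≤ 1) :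
    HasProd (fun m : ℕ => (1 - Q * q ^ (m + 1)) ^ (m + 1))
      (exp (∑' k : ℕ, -(Q ^ (k + 1) * q ^ (k + 1)) / ((k + 1) * (1 - q ^ (k + 1)) ^ 2))) := by
  refine (hasSum_succ_mul_log_one_sub_mul_pow_succ hq hQ).cexp.congr_fun fun m => ?_
  have hne : 1 - Q * q ^ (m + 1) ≠ 0 :=
    sub_ne_zero.mpr fun h => (norm_mul_pow_succ_lt_one hq hQ m).ne (by simp [← h])
  rw [Function.comp_apply, ← Nat.cast_succ, exp_nat_mul, exp_log hne]

lemma exp_div_natCast_mul_two_sin_sq (n : ℕ) (lam t : ℂ) :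
    exp (2 * Real.pi * I * n * t) / (n * (2 * sin (n * lam / 2)) ^ 2) =
      -(exp (2 * Real.pi * I * t) ^ n * exp (I * lam) ^ n) / (n * (1 - exp (I * lam) ^ n) ^ 2) := by
  rw [mul_comm (n : ℂ), ← div_div, div_two_sin_half_sq, ← exp_nat_mul, ← exp_nat_mul,
    div_div, mul_comm _ (n : ℂ)]
  ring_nf

/-- For `Im λ > 0` and `Im t > 0` (so that all series/products converge),
with `Q = e^{2πit}` and `q = e^{iλ}`,
`exp(∑_{k≥1} e^{2πikt}/(k (2 sin(kλ/2))²)) = ∏_{m≥0} (1 - Q q^{m+1})^{m+1}`. -/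
theorem resolved_conifold_product (lam t : ℂ) (hlam : 0 < lam.im) (ht : 0 < t.im) :
    Complex.exp
        (∑' k : ℕ, Complex.exp (2 * Real.pi * Complex.I * ((k + 1 : ℕ) : ℂ) * t) /
          (((k + 1 : ℕ) : ℂ) * (2 * Complex.sin (((k + 1 : ℕ) : ℂ) * lam / 2)) ^ 2)) =
      ∏' m : ℕ,
        (1 - Complex.exp (2 * Real.pi * Complex.I * t) *
            Complex.exp (Complex.I * lam) ^ (m + 1)) ^ (m + 1) := by
  have hq : ‖exp (I * lam)‖ < 1 := norm_exp_I_mul_lt_one hlam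
  have hQ : ‖exp (2 * Real.pi * I * t)‖ < 1 := by
    rw [show 2 * Real.pi * I * t = I * (2 * Real.pi * t) by ring]
    exact norm_exp_I_mul_lt_one (by simpa using mul_pos Real.two_pi_pos ht)
  simp_rw [exp_div_natCast_mul_two_sin_sq]
  push_cast
  exact (hasProd_one_sub_mul_pow_succ_pow hq hQ.le).tprod_eq.symm
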